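/- L^∞ lower bound in B^{−1}_{∞,∞} for slowly varying profiles: let f be a nonzero function in the Schwartz class on R^2 and g in the Schwartz class on R, and set h_ε(x_h, x_3) = f(x_h) g(ε x_3) on R^3. Then for ε small enough, ||h_ε||_{Ḃ^{−1}_{∞,∞}(R^3)} ≥ (1/4) ||f||_{Ḃ^{−1}_{∞,∞}(R^2)} ||g||_{L^∞(R)}. In particular the family (h_ε) is bounded below, uniformly in ε, in Ḃ^{−1}_{∞,∞}(R^3). -/

import Mathlib

open MeasureTheory Real Complex
open scoped ENNReal

noncomputable section

/-- The heat semigroup `e^{tΔ}` on `ℝ²`, via convolution with the Gaussian kernel. -/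
def heat2 (t : ℝ) (f : ℝ × ℝ → ℂ) (x : ℝ × ℝ) : ℂ :=
  ∫ y : ℝ × ℝ, (((4 * π * t) ^ (-(1 : ℝ)) *
      Real.exp (-((x.1 - y.1) ^ 2 + (x.2 - y.2) ^ 2) / (4 * t)) : ℝ) : ℂ) * f y

/-- The heat semigroup `e^{tΔ}` on `ℝ³ = (ℝ×ℝ)×ℝ`, via convolution with the Gaussian
kernel. -/
def heat3 (t : ℝ) (u : (ℝ × ℝ) × ℝ → ℂ) (x : (ℝ × ℝ) × ℝ) : ℂ :=
  ∫ y : (ℝ × ℝ) × ℝ, (((4 * π * t) ^ (-(3 : ℝ) / 2) *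
      Real.exp (-((x.1.1 - y.1.1) ^ 2 + (x.1.2 - y.1.2) ^ 2 + (x.2 - y.2) ^ 2) / (4 * t)) : ℝ) : ℂ) *
    u y

/-- The `Ḃ^{-1}_{∞,∞}(ℝ²)` norm, computed via the heat flow:
`sup_{t>0} √t ‖e^{tΔ}f‖_{L^∞}`. -/
def bNorm2 (f : ℝ × ℝ → ℂ) : ℝ≥0∞ :=
  ⨆ (t : ℝ) (_ : 0 < t), ENNReal.ofReal (Real.sqrt t) * ⨆ x : ℝ × ℝ, (‖heat2 t f x‖₊ : ℝ≥0∞)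

/-- The `Ḃ^{-1}_{∞,∞}(ℝ³)` norm, computed via the heat flow:
`sup_{t>0} √t ‖e^{tΔ}u‖_{L^∞}`. -/
def bNorm3 (u : (ℝ × ℝ) × ℝ → ℂ) : ℝ≥0∞ :=
  ⨆ (t : ℝ) (_ : 0 < t), ENNReal.ofReal (Real.sqrt t) * ⨆ x : (ℝ × ℝ) × ℝ, (‖heat3 t u x‖₊ : ℝ≥0∞)

/-- The `L^∞(ℝ)` norm (with values in `ℝ≥0∞`). -/
def linfNorm (g : ℝ → ℂ) : ℝ≥0∞ := ⨆ y : ℝ, (‖g y‖₊ : ℝ≥0∞)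

/-!
The heat flow of `h_ε = f ⊗ g(ε ·)` factorises as
`e^{tΔ} h_ε (x_h, x₃) = e^{tΔ} f (x_h) · e^{ε² t Δ} g (ε x₃)`,
the second factor by the dilation invariance of the heat equation. Choose `t₀, x₁` with
`√t₀ |e^{t₀Δ} f (x₁)|` above half of `‖f‖_{Ḃ^{-1}_{∞,∞}}` (which is finite since `f ∈ L¹ ∩ L^∞`)
and `y₀` with `|g y₀| > ‖g‖_∞ / 2`. As `e^{sΔ} g (y₀) → g (y₀)` when `s → 0⁺`, evaluating the
heat flow of `h_ε` at time `t₀` and at the point `(x₁, y₀ / ε)` gives the bound for all small `ε`.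
-/

open Filter Topology

lemma norm_ofReal_mul_of_nonneg {r : ℝ} (hr : 0 ≤ r) (z : ℂ) : ‖(r : ℂ) * z‖ = r * ‖z‖ := by
  rw [← Complex.real_smul, norm_smul_of_nonneg hr]

lemma sqrt_mul_le_add {t a C₀ C₁ : ℝ} (ht : 0 < t) (ha : 0 ≤ a) (h₀ : a ≤ C₀) (h₁ : a ≤ C₁ / t) :
    √t * a ≤ C₀ + C₁ := by
  have hC₁ : 0 ≤ C₁ := by
    by_contra! h
    linarith [div_neg_of_neg_of_pos h ht]
  rcases le_or_gt t 1 with hle | hgt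
  · nlinarith [Real.sqrt_le_one.2 hle, Real.sqrt_nonneg t]
  · have hst : 1 ≤ √t := Real.one_le_sqrt.2 hgt.le
    calc √t * a ≤ √t * (C₁ / t) := by gcongr
      _ = C₁ / √t := by field_simp; rw [Real.sq_sqrt ht.le, mul_comm]
      _ ≤ C₁ := div_le_self hC₁ hst
      _ ≤ C₀ + C₁ := le_add_of_nonneg_left (ha.trans h₀)

lemma tendsto_sq_mul_nhdsGT_zero {c : ℝ} (hc : 0 < c) :
    Tendsto (fun ε : ℝ => ε ^ 2 * c) (𝓝[>] 0) (𝓝[>] 0) := by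
  refine tendsto_nhdsWithin_iff.2 ⟨?_, ?_⟩
  · exact ((continuous_pow 2).mul continuous_const).tendsto' 0 0 (by simp) |>.mono_left
      nhdsWithin_le_nhds
  · filter_upwards [self_mem_nhdsWithin] with ε (hε : 0 < ε)
    exact mul_pos (pow_pos hε 2) hc

lemma ofReal_quarter_mul_mul (a b : ℝ≥0∞) : ENNReal.ofReal (1 / 4) * a * b = a / 2 * (b / 2) := by
  have hquarter : ENNReal.ofReal (1 / 4) = 2⁻¹ * 2⁻¹ := by
    rw [← ENNReal.mul_inv (by simp) (by simp), one_div, ENNReal.ofReal_inv_of_pos (by norm_num)]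
    norm_num
  rw [hquarter, ENNReal.div_eq_inv_mul, ENNReal.div_eq_inv_mul]
  ring

def heatKernel (t x : ℝ) : ℝ := (4 * π * t) ^ (-(1 : ℝ) / 2) * Real.exp (-x ^ 2 / (4 * t))

section heatKernel

variable {t : ℝ}

lemma heatKernel_nonneg (ht : 0 < t) (x : ℝ) : 0 ≤ heatKernel t x := by
  unfold heatKernel; positivity

@[fun_prop]
lemma continuous_heatKernel (t : ℝ) : Continuous (heatKernel t) := by unfold heatKernel; fun_prop

lemma heatKernel_neg (t x : ℝ) : heatKernel t (-x) = heatKernel t x := by simp [heatKernel]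

lemma heatKernel_eq_mul_exp (t x : ℝ) :
    heatKernel t x = (4 * π * t) ^ (-(1 : ℝ) / 2) * Real.exp (-(4 * t)⁻¹ * x ^ 2) := by
  unfold heatKernel; ring_nf

lemma integrable_heatKernel (ht : 0 < t) : Integrable (heatKernel t) := by
  simp_rw [funext (heatKernel_eq_mul_exp t)]
  exact (integrable_exp_neg_mul_sq (by positivity)).const_mul _

lemma integral_heatKernel (ht : 0 < t) : ∫ x, heatKernel t x = 1 := by
  simp_rw [heatKernel_eq_mul_exp t]
  rw [integral_const_mul, integral_gaussian, show π / (4 * t)⁻¹ = 4 * π * t by field_simp,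
    Real.sqrt_eq_rpow, ← Real.rpow_add (by positivity)]
  norm_num

lemma sqrt_mul_heatKernel (ht : 0 < t) (w : ℝ) :
    √t * heatKernel t (√t * w) = heatKernel 1 w := by
  have hsq : √t ^ 2 = t := Real.sq_sqrt ht.le
  unfold heatKernel
  have hexp : -(√t * w) ^ 2 / (4 * t) = -w ^ 2 / (4 * 1) := by
    rw [mul_pow, hsq]; field_simp
  have hcoef : √t * (4 * π * t) ^ (-(1 : ℝ) / 2) = (4 * π * 1) ^ (-(1 : ℝ) / 2) := by
    rw [Real.mul_rpow (by positivity) ht.le, Real.sqrt_eq_rpow, mul_left_comm,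
      ← Real.rpow_add ht]
    norm_num
  rw [hexp, ← mul_assoc, hcoef]

lemma heatKernel_mul_heatKernel (ht : 0 < t) (a b : ℝ) :
    heatKernel t a * heatKernel t b =
      (4 * π * t) ^ (-(1 : ℝ)) * Real.exp (-(a ^ 2 + b ^ 2) / (4 * t)) := by
  unfold heatKernel
  rw [mul_mul_mul_comm, ← Real.rpow_add (by positivity), ← Real.exp_add]
  congr 2 <;> ring

lemma heatKernel2_mul_heatKernel (ht : 0 < t) (a b c : ℝ) :
    (4 * π * t) ^ (-(1 : ℝ)) * Real.exp (-(a ^ 2 + b ^ 2) / (4 * t)) * heatKernel t c =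
      (4 * π * t) ^ (-(3 : ℝ) / 2) * Real.exp (-(a ^ 2 + b ^ 2 + c ^ 2) / (4 * t)) := by
  unfold heatKernel
  rw [mul_mul_mul_comm, ← Real.rpow_add (by positivity), ← Real.exp_add]
  congr 2 <;> ring

end heatKernel

def heat1 (t : ℝ) (g : ℝ → ℂ) (x : ℝ) : ℂ := ∫ y : ℝ, (heatKernel t (x - y) : ℂ) * g y

section heat1

variable {t : ℝ}

lemma heat1_eq_integral_heatKernel_one (ht : 0 < t) (g : ℝ → ℂ) (x : ℝ) :
    heat1 t g x = ∫ w, (heatKernel 1 w : ℂ) * g (x + √t * w) := by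
  have hst : 0 < √t := Real.sqrt_pos.2 ht
  set G : ℝ → ℂ := fun w => (heatKernel t (-w) : ℂ) * g (x + w)
  have hG : ∫ w, G (√t * w) = (√t)⁻¹ • heat1 t g x := by
    rw [Measure.integral_comp_mul_left G √t, abs_of_pos (inv_pos.2 hst), heat1,
      ← integral_add_left_eq_self (fun y => (heatKernel t (x - y) : ℂ) * g y) x]
    simp [G]
  calc heat1 t g x = √t • ∫ w, G (√t * w) := by rw [hG, smul_smul, mul_inv_cancel₀ hst.ne', one_smul]
    _ = ∫ w, (heatKernel 1 w : ℂ) * g (x + √t * w) := by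
      rw [← integral_smul]
      congr 1 with w
      simp only [G, ← sqrt_mul_heatKernel ht w, ← heatKernel_neg t (√t * w), Complex.real_smul,
        Complex.ofReal_mul, mul_assoc]

lemma heat1_comp_mul (ht : 0 < t) {ε : ℝ} (hε : 0 < ε) (g : ℝ → ℂ) (x : ℝ) :
    heat1 t (fun y => g (ε * y)) x = heat1 (ε ^ 2 * t) g (ε * x) := by
  rw [heat1_eq_integral_heatKernel_one ht, heat1_eq_integral_heatKernel_one (by positivity),
    Real.sqrt_mul (sq_nonneg ε), Real.sqrt_sq hε.le]
  congr 1 with w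
  ring_nf

lemma tendsto_heat1_nhdsGT_zero {g : ℝ → ℂ} (hg : Continuous g) {C : ℝ} (hC : ∀ y, ‖g y‖ ≤ C)
    (x : ℝ) : Tendsto (fun t => heat1 t g x) (𝓝[>] 0) (𝓝 (g x)) := by
  have hlim : Tendsto (fun s => ∫ w, (heatKernel 1 w : ℂ) * g (x + s * w)) (𝓝 0)
      (𝓝 (∫ w, (heatKernel 1 w : ℂ) * g (x + 0 * w))) := by
    refine tendsto_integral_filter_of_dominated_convergence (fun w => heatKernel 1 w * C)
      (.of_forall fun s => by fun_prop) (.of_forall fun s => .of_forall fun w => ?_)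
      ((integrable_heatKernel one_pos).mul_const C) (.of_forall fun w => ?_)
    · rw [norm_ofReal_mul_of_nonneg (heatKernel_nonneg one_pos w)]
      exact mul_le_mul_of_nonneg_left (hC _) (heatKernel_nonneg one_pos w)
    · exact ((hg.comp (by fun_prop)).tendsto 0).const_mul _
  have hval : ∫ w, (heatKernel 1 w : ℂ) * g (x + 0 * w) = g x := by
    simp_rw [zero_mul, add_zero]
    rw [integral_mul_const, integral_complex_ofReal, integral_heatKernel one_pos,
      Complex.ofReal_one, one_mul]
  rw [hval] at hlim
  have hsqrt : Tendsto Real.sqrt (𝓝[>] 0) (𝓝 0) := by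
    simpa using (Real.continuous_sqrt.tendsto 0).mono_left nhdsWithin_le_nhds
  refine (hlim.comp hsqrt).congr' ?_
  filter_upwards [self_mem_nhdsWithin] with t ht
  exact (heat1_eq_integral_heatKernel_one ht g x).symm

end heat1

section heat2

variable {t : ℝ}

lemma heat2_eq (ht : 0 < t) (f : ℝ × ℝ → ℂ) (x : ℝ × ℝ) :
    heat2 t f x = ∫ y, ((heatKernel t (x.1 - y.1) * heatKernel t (x.2 - y.2) : ℝ) : ℂ) * f y := by
  simp only [heat2, heatKernel_mul_heatKernel ht]

lemma integrable_heatKernel_mul_heatKernel (ht : 0 < t) (x : ℝ × ℝ) :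
    Integrable (fun y : ℝ × ℝ => heatKernel t (x.1 - y.1) * heatKernel t (x.2 - y.2)) := by
  rw [Measure.volume_eq_prod]
  exact ((integrable_heatKernel ht).comp_sub_left x.1).mul_prod
    ((integrable_heatKernel ht).comp_sub_left x.2)

lemma integral_heatKernel_mul_heatKernel (ht : 0 < t) (x : ℝ × ℝ) :
    ∫ y : ℝ × ℝ, heatKernel t (x.1 - y.1) * heatKernel t (x.2 - y.2) = 1 := by
  rw [Measure.volume_eq_prod, integral_prod_mul (fun a => heatKernel t (x.1 - a))
    (fun b => heatKernel t (x.2 - b)), integral_sub_left_eq_self (heatKernel t),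
    integral_sub_left_eq_self (heatKernel t), integral_heatKernel ht, one_mul]

lemma heatKernel_mul_heatKernel_le (ht : 0 < t) (a b : ℝ) :
    heatKernel t a * heatKernel t b ≤ (4 * π)⁻¹ / t := by
  rw [heatKernel_mul_heatKernel ht, Real.rpow_neg_one, mul_inv, ← div_eq_mul_inv]
  refine mul_le_of_le_one_right (by positivity) (Real.exp_le_one_iff.2 ?_)
  exact div_nonpos_of_nonpos_of_nonneg (by nlinarith [sq_nonneg a, sq_nonneg b]) (by positivity)

lemma norm_heat2_le_of_norm_le (ht : 0 < t) {f : ℝ × ℝ → ℂ} {C : ℝ} (hC : ∀ y, ‖f y‖ ≤ C)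
    (x : ℝ × ℝ) : ‖heat2 t f x‖ ≤ C := by
  have hk := fun y : ℝ × ℝ =>
    mul_nonneg (heatKernel_nonneg ht (x.1 - y.1)) (heatKernel_nonneg ht (x.2 - y.2))
  calc ‖heat2 t f x‖
      ≤ ∫ y : ℝ × ℝ, heatKernel t (x.1 - y.1) * heatKernel t (x.2 - y.2) * C := by
        rw [heat2_eq ht]
        refine norm_integral_le_of_norm_le ((integrable_heatKernel_mul_heatKernel ht x).mul_const C)
          (.of_forall fun y => ?_)
        rw [norm_ofReal_mul_of_nonneg (hk y)]
        exact mul_le_mul_of_nonneg_left (hC y) (hk y)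
    _ = C := by rw [integral_mul_const, integral_heatKernel_mul_heatKernel ht, one_mul]

lemma norm_heat2_le_integral_norm_div (ht : 0 < t) {f : ℝ × ℝ → ℂ} (hf : Integrable f)
    (x : ℝ × ℝ) : ‖heat2 t f x‖ ≤ ((4 * π)⁻¹ * ∫ y, ‖f y‖) / t := by
  have hk := fun y : ℝ × ℝ =>
    mul_nonneg (heatKernel_nonneg ht (x.1 - y.1)) (heatKernel_nonneg ht (x.2 - y.2))
  calc ‖heat2 t f x‖ ≤ ∫ y, (4 * π)⁻¹ / t * ‖f y‖ := by
        rw [heat2_eq ht]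
        refine norm_integral_le_of_norm_le (hf.norm.const_mul _) (.of_forall fun y => ?_)
        rw [norm_ofReal_mul_of_nonneg (hk y)]
        exact mul_le_mul_of_nonneg_right (heatKernel_mul_heatKernel_le ht _ _) (norm_nonneg _)
    _ = ((4 * π)⁻¹ * ∫ y, ‖f y‖) / t := by rw [integral_const_mul]; ring

end heat2

lemma heat3_mul {t : ℝ} (ht : 0 < t) (f : ℝ × ℝ → ℂ) (g : ℝ → ℂ) (x : (ℝ × ℝ) × ℝ) :
    heat3 t (fun z => f z.1 * g z.2) x = heat2 t f x.1 * heat1 t g x.2 := by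
  rw [heat2_eq ht, heat1, ← integral_prod_mul, ← Measure.volume_eq_prod, heat3]
  congr 1 with y
  rw [← heatKernel2_mul_heatKernel ht, ← heatKernel_mul_heatKernel ht]
  push_cast
  ring

lemma bNorm2_ne_top {f : ℝ × ℝ → ℂ} (hf : Integrable f) {C : ℝ} (hC : ∀ y, ‖f y‖ ≤ C) :
    bNorm2 f ≠ ⊤ := by
  refine ne_top_of_le_ne_top (ENNReal.ofReal_ne_top (r := C + (4 * π)⁻¹ * ∫ y, ‖f y‖))
    (iSup₂_le fun t ht => ?_)
  rw [ENNReal.mul_iSup]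
  refine iSup_le fun x => ?_
  rw [← enorm_eq_nnnorm, ← ofReal_norm, ← ENNReal.ofReal_mul (Real.sqrt_nonneg t)]
  exact ENNReal.ofReal_le_ofReal <| sqrt_mul_le_add ht (norm_nonneg _)
    (norm_heat2_le_of_norm_le ht hC x) (norm_heat2_le_integral_norm_div ht hf x)

lemma linfNorm_ne_top {g : ℝ → ℂ} {C : ℝ} (hC : ∀ y, ‖g y‖ ≤ C) : linfNorm g ≠ ⊤ := by
  refine ne_top_of_le_ne_top (ENNReal.ofReal_ne_top (r := C)) (iSup_le fun y => ?_)
  rw [← enorm_eq_nnnorm, ← ofReal_norm]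
  exact ENNReal.ofReal_le_ofReal (hC y)

lemma exists_lt_of_lt_bNorm2 {f : ℝ × ℝ → ℂ} {a : ℝ≥0∞} (h : a < bNorm2 f) :
    ∃ t, 0 < t ∧ ∃ x, a < ENNReal.ofReal √t * ‖heat2 t f x‖ₑ := by
  simpa only [bNorm2, lt_iSup_iff, ENNReal.mul_iSup, enorm_eq_nnnorm, exists_prop] using h

lemma exists_lt_of_lt_linfNorm {g : ℝ → ℂ} {a : ℝ≥0∞} (h : a < linfNorm g) :
    ∃ y, a < ‖g y‖ₑ := by
  simpa only [linfNorm, lt_iSup_iff, enorm_eq_nnnorm] using h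

lemma le_bNorm3 {t : ℝ} (ht : 0 < t) (u : (ℝ × ℝ) × ℝ → ℂ) (x : (ℝ × ℝ) × ℝ) :
    ENNReal.ofReal √t * ‖heat3 t u x‖ₑ ≤ bNorm3 u := by
  rw [enorm_eq_nnnorm]
  exact le_iSup₂_of_le (f := fun t (_ : 0 < t) => ENNReal.ofReal √t * ⨆ x, (‖heat3 t u x‖₊ : ℝ≥0∞))
    t ht (mul_le_mul_right (le_iSup (fun x => (‖heat3 t u x‖₊ : ℝ≥0∞)) x) _)

theorem slowly_varying_lower_bound_general (f : SchwartzMap (ℝ × ℝ) ℂ)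
    (g : SchwartzMap ℝ ℂ) :
    ∃ ε₀ : ℝ, 0 < ε₀ ∧ ∀ ε : ℝ, 0 < ε → ε < ε₀ →
      ENNReal.ofReal (1 / 4) * bNorm2 (⇑f) * linfNorm (⇑g) ≤
        bNorm3 (fun x => f x.1 * g (ε * x.2)) := by
  rcases eq_or_ne (bNorm2 f) 0 with hB | hB
  · exact ⟨1, one_pos, fun ε _ _ => by simp [hB]⟩
  rcases eq_or_ne (linfNorm g) 0 with hL | hL
  · exact ⟨1, one_pos, fun ε _ _ => by simp [hL]⟩
  have hg : ∀ y, ‖g y‖ ≤ SchwartzMap.seminorm ℝ 0 0 g := SchwartzMap.norm_le_seminorm ℝ g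
  obtain ⟨t₀, ht₀, x₁, hx₁⟩ := exists_lt_of_lt_bNorm2 <|
    ENNReal.half_lt_self hB (bNorm2_ne_top f.integrable (SchwartzMap.norm_le_seminorm ℝ f))
  obtain ⟨y₀, hy₀⟩ := exists_lt_of_lt_linfNorm (ENNReal.half_lt_self hL (linfNorm_ne_top hg))
  have hev : ∀ᶠ ε in 𝓝[>] 0, linfNorm g / 2 < ‖heat1 (ε ^ 2 * t₀) g y₀‖ₑ :=
    ((tendsto_heat1_nhdsGT_zero g.continuous hg y₀).comp (tendsto_sq_mul_nhdsGT_zero ht₀)).enorm.eventually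
      (lt_mem_nhds hy₀)
  obtain ⟨ε₀, hε₀, hsub⟩ := mem_nhdsGT_iff_exists_Ioo_subset.1 hev
  refine ⟨ε₀, hε₀, fun ε hε hεε₀ => ?_⟩
  have hfac : heat3 t₀ (fun x => f x.1 * g (ε * x.2)) (x₁, y₀ / ε) =
      heat2 t₀ f x₁ * heat1 (ε ^ 2 * t₀) g y₀ := by
    rw [heat3_mul ht₀ f (fun y => g (ε * y)), heat1_comp_mul ht₀ hε, mul_div_cancel₀ _ hε.ne']
  calc ENNReal.ofReal (1 / 4) * bNorm2 f * linfNorm g = bNorm2 f / 2 * (linfNorm g / 2) :=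
        ofReal_quarter_mul_mul _ _
    _ ≤ ENNReal.ofReal √t₀ * ‖heat2 t₀ f x₁‖ₑ * ‖heat1 (ε ^ 2 * t₀) g y₀‖ₑ :=
        mul_le_mul' hx₁.le (hsub ⟨hε, hεε₀⟩).le
    _ = ENNReal.ofReal √t₀ * ‖heat3 t₀ (fun x => f x.1 * g (ε * x.2)) (x₁, y₀ / ε)‖ₑ := by
        rw [hfac, enorm_mul, mul_assoc]
    _ ≤ bNorm3 (fun x => f x.1 * g (ε * x.2)) := le_bNorm3 ht₀ _ _

/-- `L^∞` lower bound in `Ḃ^{-1}_{∞,∞}` for slowly varying profiles: for Schwartz `f ≠ 0`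
on `ℝ²` and Schwartz `g` on `ℝ`, the function `h_ε(x_h,x₃) = f(x_h) g(ε x₃)` satisfies,
for `ε` small enough, `‖h_ε‖_{Ḃ^{-1}_{∞,∞}(ℝ³)} ≥ (1/4) ‖f‖_{Ḃ^{-1}_{∞,∞}(ℝ²)} ‖g‖_{L^∞}`. -/
theorem slowly_varying_lower_bound (f : SchwartzMap (ℝ × ℝ) ℂ) (hf : f ≠ 0)
    (g : SchwartzMap ℝ ℂ) :
    ∃ ε₀ : ℝ, 0 < ε₀ ∧ ∀ ε : ℝ, 0 < ε → ε < ε₀ →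
      ENNReal.ofReal (1 / 4) * bNorm2 (⇑f) * linfNorm (⇑g) ≤
        bNorm3 (fun x => f x.1 * g (ε * x.2)) :=
  slowly_varying_lower_bound_general f g

end
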